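/- For every n ≥ 1 and every nonzero multi-index μ ∈ ℕ^n, the supremum of |w^μ| over the closed unit ball of ℂ^n equals s_μ := ∏_{j=1}^n (μ_j/|μ|)^{μ_j/2}, with the convention 0^0 = 1. Consequently, sup_{|w|≤ε} |s_μ^{−1} w^μ| = ε^{|μ|} for every ε > 0. -/

import Mathlib

open Finset

/-- `s_μ = ∏_j (μ_j/|μ|)^{μ_j/2}` (real powers, with the convention `0^0 = 1`). -/
noncomputable def sCoeff {n : ℕ} (μ : Fin n → ℕ) : ℝ :=
  ∏ j, ((μ j : ℝ) / ((∑ i, μ i : ℕ) : ℝ)) ^ ((μ j : ℝ) / 2)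

/-! Put `t_j = μ_j / |μ|`. Weighted AM–GM with weights `t_j`, applied to `|w_j|² / t_j`, gives
`∏ (|w_j|²)^{t_j} ≤ |w|² ∏ t_j^{t_j}`; raising both sides to the power `|μ|/2` turns this into
`|w^μ| ≤ |w|^{|μ|} s_μ`, with equality at `w_j = r √t_j`, `r = |w|`. -/

theorem Fintype.sum_ne_zero_of_ne_zero {ι : Type*} [Fintype ι] {μ : ι → ℕ} (hμ : μ ≠ 0) :
    ∑ i, μ i ≠ 0 := by
  simpa [Finset.sum_eq_zero_iff, funext_iff] using hμ

theorem Fintype.sum_natCast_div_sum_eq_one {ι : Type*} [Fintype ι] {μ : ι → ℕ} (hμ : μ ≠ 0) :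
    ∑ j, (μ j : ℝ) / (∑ i, μ i : ℕ) = 1 := by
  rw [← sum_div, div_eq_one_iff_eq (by exact_mod_cast sum_ne_zero_of_ne_zero hμ)]
  simp

namespace Real

theorem prod_rpow_le_sum_mul_prod_rpow_self {ι : Type*} (s : Finset ι) {t z : ι → ℝ}
    (ht : ∀ i ∈ s, 0 ≤ t i) (ht_sum : ∑ i ∈ s, t i = 1) (hz : ∀ i ∈ s, 0 ≤ z i) :
    ∏ i ∈ s, z i ^ t i ≤ (∑ i ∈ s, z i) * ∏ i ∈ s, t i ^ t i := by
  have hzt : ∀ i ∈ s, 0 ≤ z i / t i := fun i hi => div_nonneg (hz i hi) (ht i hi)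
  -- Where `t i = 0` the junk value `z i / 0 = 0` is harmless: both sides are `1`.
  have hfactor : ∀ i ∈ s, z i ^ t i = t i ^ t i * (z i / t i) ^ t i := by
    intro i hi
    rcases (ht i hi).eq_or_lt with h | h
    · simp [← h]
    · rw [← mul_rpow (ht i hi) (hzt i hi), mul_div_cancel₀ _ h.ne']
  have hmean : ∑ i ∈ s, t i * (z i / t i) ≤ ∑ i ∈ s, z i := by
    refine sum_le_sum fun i hi => ?_
    rcases (ht i hi).eq_or_lt with h | h
    · simpa [← h] using hz i hi
    · rw [mul_div_cancel₀ _ h.ne']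
  calc ∏ i ∈ s, z i ^ t i = (∏ i ∈ s, t i ^ t i) * ∏ i ∈ s, (z i / t i) ^ t i := by
        rw [prod_congr rfl hfactor, prod_mul_distrib]
    _ ≤ (∏ i ∈ s, t i ^ t i) * ∑ i ∈ s, z i :=
        mul_le_mul_of_nonneg_left
          ((geom_mean_le_arith_mean_weighted s t _ ht ht_sum hzt).trans hmean)
          (prod_nonneg fun i hi => rpow_nonneg (ht i hi) _)
    _ = _ := mul_comm _ _

theorem sq_rpow_natCast_div_two {a : ℝ} (ha : 0 ≤ a) (m : ℕ) :
    (a ^ 2) ^ ((m : ℝ) / 2) = a ^ m := by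
  rw [← rpow_natCast a 2, ← rpow_mul ha, ← rpow_natCast]
  congr 1
  push_cast
  ring

theorem prod_rpow_div_two_eq {ι : Type*} (s : Finset ι) {x : ι → ℝ} (hx : ∀ i ∈ s, 0 ≤ x i)
    (μ : ι → ℕ) (hμ : ∑ i ∈ s, μ i ≠ 0) :
    ∏ i ∈ s, x i ^ ((μ i : ℝ) / 2) =
      (∏ i ∈ s, x i ^ ((μ i : ℝ) / (∑ i ∈ s, μ i : ℕ))) ^ ((∑ i ∈ s, μ i : ℕ) / 2 : ℝ) := by
  rw [← finsetProd_rpow s _ (fun i hi => rpow_nonneg (hx i hi) _)]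
  refine prod_congr rfl fun i hi => ?_
  rw [← rpow_mul (hx i hi)]
  congr 1
  field_simp

end Real

open Real

variable {n : ℕ} {μ : Fin n → ℕ}

theorem sCoeff_pos (hμ : μ ≠ 0) : 0 < sCoeff μ := by
  have hM : (0 : ℝ) < (∑ i, μ i : ℕ) := by
    exact_mod_cast Nat.pos_of_ne_zero (Fintype.sum_ne_zero_of_ne_zero hμ)
  refine prod_pos fun j _ => ?_
  rcases Nat.eq_zero_or_pos (μ j) with h | h
  · simp [h]
  · exact rpow_pos_of_pos (by positivity) _

theorem norm_prod_pow_le (hμ : μ ≠ 0) {r : ℝ} (hr : 0 ≤ r) {w : EuclideanSpace ℂ (Fin n)}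
    (hw : ‖w‖ ≤ r) :
    ‖∏ j, w j ^ μ j‖ ≤ r ^ (∑ i, μ i) * sCoeff μ := by
  set M : ℕ := ∑ i, μ i
  set t : Fin n → ℝ := fun j => (μ j : ℝ) / M
  have ht : ∀ j ∈ univ, 0 ≤ t j := fun j _ => by positivity
  have ht_sum : ∑ j, t j = 1 := Fintype.sum_natCast_div_sum_eq_one hμ
  have hw2 : ∑ j, ‖w j‖ ^ 2 ≤ r ^ 2 := by
    rw [← EuclideanSpace.norm_sq_eq]; gcongr
  calc ‖∏ j, w j ^ μ j‖ = ∏ j, (‖w j‖ ^ 2) ^ ((μ j : ℝ) / 2) := by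
        simp only [norm_prod, norm_pow, sq_rpow_natCast_div_two (norm_nonneg _)]
    _ = (∏ j, (‖w j‖ ^ 2) ^ t j) ^ ((M : ℝ) / 2) :=
        prod_rpow_div_two_eq _ (fun j _ => by positivity) μ (Fintype.sum_ne_zero_of_ne_zero hμ)
    _ ≤ ((∑ j, ‖w j‖ ^ 2) * ∏ j, t j ^ t j) ^ ((M : ℝ) / 2) := by
        gcongr
        exact prod_rpow_le_sum_mul_prod_rpow_self _ ht ht_sum fun j _ => by positivity
    _ ≤ (r ^ 2 * ∏ j, t j ^ t j) ^ ((M : ℝ) / 2) := by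
        gcongr
    _ = r ^ M * sCoeff μ := by
        rw [mul_rpow (by positivity) (prod_nonneg fun j _ => rpow_nonneg (ht j (mem_univ j)) _),
          sq_rpow_natCast_div_two hr, sCoeff,
          prod_rpow_div_two_eq _ ht μ (Fintype.sum_ne_zero_of_ne_zero hμ)]

theorem exists_norm_eq_norm_prod_pow_eq (hμ : μ ≠ 0) {r : ℝ} (hr : 0 ≤ r) :
    ∃ w : EuclideanSpace ℂ (Fin n), ‖w‖ = r ∧ ‖∏ j, w j ^ μ j‖ = r ^ (∑ i, μ i) * sCoeff μ := by
  set t : Fin n → ℝ := fun j => (μ j : ℝ) / (∑ i, μ i : ℕ)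
  have ht : ∀ j, 0 ≤ t j := fun j => by positivity
  have ht_sum : ∑ j, t j = 1 := Fintype.sum_natCast_div_sum_eq_one hμ
  refine ⟨WithLp.toLp 2 fun j => ((r * √(t j) : ℝ) : ℂ), ?_, ?_⟩
  · simp only [EuclideanSpace.norm_eq, Complex.norm_real, norm_mul,
      Real.norm_eq_abs, abs_of_nonneg hr, abs_of_nonneg (sqrt_nonneg _), mul_pow,
      sq_sqrt (ht _), ← mul_sum, ht_sum, mul_one, sqrt_sq hr]
  · simp only [norm_prod, norm_pow, Complex.norm_real, norm_mul,
      Real.norm_eq_abs, abs_of_nonneg hr, abs_of_nonneg (sqrt_nonneg _), mul_pow,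
      prod_mul_distrib, prod_pow_eq_pow_sum, sCoeff]
    congr 1
    refine prod_congr rfl fun j _ => ?_
    rw [← sq_rpow_natCast_div_two (sqrt_nonneg _), sq_sqrt (ht j)]

theorem isGreatest_norm_prod_pow_closedBall (hμ : μ ≠ 0) {r : ℝ} (hr : 0 ≤ r) :
    IsGreatest {x : ℝ | ∃ w : EuclideanSpace ℂ (Fin n), ‖w‖ ≤ r ∧ x = ‖∏ j, w j ^ μ j‖}
      (r ^ (∑ i, μ i) * sCoeff μ) := by
  obtain ⟨w, hw, hval⟩ := exists_norm_eq_norm_prod_pow_eq hμ hr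
  exact ⟨⟨w, hw.le, hval.symm⟩, by rintro x ⟨w, hw, rfl⟩; exact norm_prod_pow_le hμ hr hw⟩

theorem sup_monomial_closed_ball_general (n : ℕ) (μ : Fin n → ℕ) (hμ : μ ≠ 0) :
    IsGreatest
      {x : ℝ | ∃ w : EuclideanSpace ℂ (Fin n), ‖w‖ ≤ 1 ∧ x = ‖∏ j, w j ^ μ j‖}
      (sCoeff μ) ∧
    ∀ ε : ℝ, 0 < ε →
      IsGreatest
        {x : ℝ | ∃ w : EuclideanSpace ℂ (Fin n), ‖w‖ ≤ ε ∧
          x = ‖((sCoeff μ : ℝ) : ℂ)⁻¹ * ∏ j, w j ^ μ j‖}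
        (ε ^ (∑ i, μ i)) := by
  have hs := sCoeff_pos hμ
  refine ⟨by simpa using isGreatest_norm_prod_pow_closedBall hμ zero_le_one, fun ε hε => ?_⟩
  have hnorm (w : EuclideanSpace ℂ (Fin n)) :
      ‖((sCoeff μ : ℝ) : ℂ)⁻¹ * ∏ j, w j ^ μ j‖ = (sCoeff μ)⁻¹ * ‖∏ j, w j ^ μ j‖ := by
    rw [norm_mul, norm_inv, Complex.norm_real, Real.norm_of_nonneg hs.le]
  obtain ⟨w, hw, hval⟩ := exists_norm_eq_norm_prod_pow_eq hμ hε.le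
  refine ⟨⟨w, hw.le, ?_⟩, ?_⟩
  · rw [hnorm, hval, mul_comm, mul_inv_cancel_right₀ hs.ne']
  · rintro x ⟨v, hv, rfl⟩
    rw [hnorm, inv_mul_le_iff₀ hs, mul_comm]
    exact norm_prod_pow_le hμ hε.le hv

/-- For every `n ≥ 1` and every nonzero multi-index `μ ∈ ℕⁿ`, the supremum
of `|w^μ|` over the closed unit ball of `ℂⁿ` equals (and is attained at)
`s_μ = ∏_j (μ_j/|μ|)^{μ_j/2}`. Consequently, for every `ε > 0`,
`sup_{|w| ≤ ε} |s_μ⁻¹ w^μ| = ε^{|μ|}`. -/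
theorem sup_monomial_closed_ball (n : ℕ) (hn : 1 ≤ n) (μ : Fin n → ℕ) (hμ : μ ≠ 0) :
    IsGreatest
      {x : ℝ | ∃ w : EuclideanSpace ℂ (Fin n), ‖w‖ ≤ 1 ∧ x = ‖∏ j, w j ^ μ j‖}
      (sCoeff μ) ∧
    ∀ ε : ℝ, 0 < ε →
      IsGreatest
        {x : ℝ | ∃ w : EuclideanSpace ℂ (Fin n), ‖w‖ ≤ ε ∧
          x = ‖((sCoeff μ : ℝ) : ℂ)⁻¹ * ∏ j, w j ^ μ j‖}
        (ε ^ (∑ i, μ i)) :=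
  sup_monomial_closed_ball_general n μ hμ
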